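/- Let v be a ℤⁿ-valued valuation on the rational function field ℂ(x₁,…,xₙ) with one-dimensional leaves whose value group is all of ℤⁿ, restricted to ℂ[x₁,…,xₙ]. Let I ⊆ ℂ[x₀,…,xₙ] be a nonzero homogeneous ideal generated by homogeneous polynomials of degree at most d, and let underlineΔ(I) ⊆ ℝⁿ × ℝ be constructed from I and v as described. Let q ∈ ℚ with q > d, and write q = b/a with a, b positive integers. Then the fiber underlineΔ_q := {α ∈ ℝⁿ : (α, q) ∈ underlineΔ(I)} satisfies underlineΔ_q = (1/a)·Δ( ((I^a)_b)|_{x₀=1} ), where Δ(L) denotes the Newton–Okounkov body of the subspace L with respect to v. -/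

import Mathlib

/-!
A point `(β, s, t)` of `U_I` comes from some `F ∈ (I^t)_s`. Fix a generator `f₀` of `I` of
degree `e < b/a` with `f₀(1, x) ≠ 0`; one exists once the fiber is nonempty, since otherwise
dehomogenization kills `I` and `U_I` lies in `{t = 0}`. Let `p = (a s - t b)⁺` and `k = t + p`.
Then `F^a f₀^(a p) x₀^r` lies in `(I^(a k))_(k b)`, which equals `((I^a)_b)^k` because `I^a` is
generated in degrees `≤ a d ≤ b`. So the padding map `(β, s, t) ↦ (a β + a p v(f₀), t + p)`
sends `U_I` into `U_L`. It is continuous and positively homogeneous, and the closed convex cone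
of the monoid `U_I` is the closure of its rational multiples, hence padding carries `Σ(U_I)`
into `Σ(U_L)`; it sends `(α, b/a, 1)` to `(a α, 1)`. Conversely `(β, u) ↦ (β, b u, a u)` maps
`U_L` into `U_I`, since `((I^a)_b)^u ⊆ (I^(a u))_(b u)`.
-/

open MvPolynomial Pointwise

/-- The lexicographic linear order on `ℤⁿ`. -/
noncomputable instance lexPiIntLinearOrder (n : ℕ) : LinearOrder (Lex (Fin n → ℤ)) :=
  @Pi.Lex.linearOrder (Fin n) (fun _ => ℤ) Fin.instLinearOrder
    (inferInstanceAs (WellFoundedLT (Fin n))) inferInstance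

noncomputable instance lexPiIntMin (n : ℕ) : Min (Lex (Fin n → ℤ)) :=
  @LinearOrder.toMin _ (lexPiIntLinearOrder n)

/-- The degree-`s` homogeneous component of an ideal in `ℂ[x₀,…,xₙ]`,
as a `ℂ`-subspace of the polynomial ring. -/
noncomputable def idealComponent {n : ℕ} (I : Ideal (MvPolynomial (Fin (n + 1)) ℂ)) (s : ℕ) :
    Submodule ℂ (MvPolynomial (Fin (n + 1)) ℂ) :=
  I.restrictScalars ℂ ⊓ homogeneousSubmodule (Fin (n + 1)) ℂ s

/-- Setting `x₀ = 1`: the dehomogenization map `ℂ[x₀,…,xₙ] → ℂ[x₁,…,xₙ]`. -/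
noncomputable def dehom (n : ℕ) : MvPolynomial (Fin (n + 1)) ℂ →ₐ[ℂ] MvPolynomial (Fin n) ℂ :=
  aeval (Fin.cases 1 X)

/-- The smallest closed convex cone containing a subset `U` of a real vector space. -/
def closedConvexConeHull {E : Type*} [AddCommGroup E] [Module ℝ E] [TopologicalSpace E]
    (U : Set E) : Set E :=
  ⋂₀ {C : Set E | U ⊆ C ∧ IsClosed C ∧ Convex ℝ C ∧ ∀ c : ℝ, 0 ≤ c → ∀ x ∈ C, c • x ∈ C}

/-- The graded semigroup `U_I ⊆ ℝⁿ × ℝ²` of a homogeneous ideal `I ⊆ ℂ[x₀,…,xₙ]` with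
respect to a `ℤⁿ`-valued function `w` on `ℂ[x₁,…,xₙ]`. -/
def gradedSemigroup {n : ℕ} (w : MvPolynomial (Fin n) ℂ → (Fin n → ℤ))
    (I : Ideal (MvPolynomial (Fin (n + 1)) ℂ)) : Set ((Fin n → ℝ) × ℝ × ℝ) :=
  {p | ∃ s t : ℕ, ∃ α ∈ w ''
      ((⇑(dehom n) '' ((idealComponent (I ^ t) s : Set (MvPolynomial (Fin (n + 1)) ℂ)))) \ {0}),
    p = (fun i => (α i : ℝ), (s : ℝ), (t : ℝ))}

/-- `underlineΔ(I) = Σ(U_I) ∩ {t = 1} ⊆ ℝⁿ × ℝ`. -/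
def underlineDelta {n : ℕ} (w : MvPolynomial (Fin n) ℂ → (Fin n → ℤ))
    (I : Ideal (MvPolynomial (Fin (n + 1)) ℂ)) : Set ((Fin n → ℝ) × ℝ) :=
  {p | (p.1, p.2, (1 : ℝ)) ∈ closedConvexConeHull (gradedSemigroup w I)}

/-- The graded semigroup `U_L ⊆ ℝⁿ × ℝ` of a finite-dimensional subspace
`L ⊆ ℂ[x₁,…,xₙ]` with respect to a `ℤⁿ`-valued function `w`. -/
def subspaceSemigroup {n : ℕ} (w : MvPolynomial (Fin n) ℂ → (Fin n → ℤ))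
    (L : Submodule ℂ (MvPolynomial (Fin n) ℂ)) : Set ((Fin n → ℝ) × ℝ) :=
  {p | ∃ u : ℕ, ∃ α ∈ w ''
      (((L ^ u : Submodule ℂ (MvPolynomial (Fin n) ℂ)) : Set (MvPolynomial (Fin n) ℂ)) \ {0}),
    p = (fun i => (α i : ℝ), (u : ℝ))}

/-- The Newton–Okounkov body `Δ(L) = Σ(U_L) ∩ {u = 1} ⊆ ℝⁿ` of a subspace
`L ⊆ ℂ[x₁,…,xₙ]` with respect to a `ℤⁿ`-valued function `w`. -/
def NObodySubspace {n : ℕ} (w : MvPolynomial (Fin n) ℂ → (Fin n → ℤ))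
    (L : Submodule ℂ (MvPolynomial (Fin n) ℂ)) : Set (Fin n → ℝ) :=
  {α | (α, (1 : ℝ)) ∈ closedConvexConeHull (subspaceSemigroup w L)}

section ClosedConvexConeHull

variable {E F : Type*} [AddCommGroup E] [Module ℝ E] [TopologicalSpace E]
  [AddCommGroup F] [Module ℝ F] [TopologicalSpace F]

theorem subset_closedConvexConeHull (U : Set E) : U ⊆ closedConvexConeHull U :=
  fun _ hx => Set.mem_sInter.mpr fun _ hC => hC.1 hx

theorem closedConvexConeHull_subset {U C : Set E} (hUC : U ⊆ C) (hC : IsClosed C)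
    (hconv : Convex ℝ C) (hcone : ∀ c : ℝ, 0 ≤ c → ∀ x ∈ C, c • x ∈ C) :
    closedConvexConeHull U ⊆ C :=
  Set.sInter_subset_of_mem ⟨hUC, hC, hconv, hcone⟩

theorem isClosed_closedConvexConeHull (U : Set E) : IsClosed (closedConvexConeHull U) :=
  isClosed_sInter fun _ hC => hC.2.1

theorem smul_mem_closedConvexConeHull {U : Set E} {c : ℝ} (hc : 0 ≤ c) {x : E}
    (hx : x ∈ closedConvexConeHull U) : c • x ∈ closedConvexConeHull U :=
  Set.mem_sInter.mpr fun C hC => hC.2.2.2 c hc x (Set.mem_sInter.mp hx C hC)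

theorem convex_closedConvexConeHull (U : Set E) : Convex ℝ (closedConvexConeHull U) :=
  fun _ hx _ hy _ _ hs ht hst => Set.mem_sInter.mpr fun C hC =>
    hC.2.2.1 (Set.mem_sInter.mp hx C hC) (Set.mem_sInter.mp hy C hC) hs ht hst

theorem mapsTo_closedConvexConeHull {U : Set E} {V : Set F} (f : E →L[ℝ] F)
    (hf : Set.MapsTo f U (closedConvexConeHull V)) :
    Set.MapsTo f (closedConvexConeHull U) (closedConvexConeHull V) :=
  closedConvexConeHull_subset (C := f ⁻¹' closedConvexConeHull V) hf
    ((isClosed_closedConvexConeHull V).preimage f.continuous)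
    ((convex_closedConvexConeHull V).linear_preimage f.toLinearMap)
    fun c hc x (hx : f x ∈ closedConvexConeHull V) => show f (c • x) ∈ _ by
      rw [map_smul]
      exact smul_mem_closedConvexConeHull hc hx

end ClosedConvexConeHull

def AddSubmonoid.nsmulSaturation {E : Type*} [AddCommMonoid E] (Γ : AddSubmonoid E) : Set E :=
  {y | ∃ N : ℕ, 0 < N ∧ N • y ∈ Γ}

section Saturation

variable {E : Type*} [AddCommMonoid E] (Γ : AddSubmonoid E)

theorem AddSubmonoid.add_mem_nsmulSaturation {x y : E} (hx : x ∈ Γ.nsmulSaturation)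
    (hy : y ∈ Γ.nsmulSaturation) : x + y ∈ Γ.nsmulSaturation := by
  obtain ⟨N, hN, hNx⟩ := hx
  obtain ⟨M, hM, hMy⟩ := hy
  refine ⟨N * M, Nat.mul_pos hN hM, ?_⟩
  rw [smul_add, mul_comm N M, mul_smul, mul_comm M N, mul_smul]
  exact add_mem (nsmul_mem hNx M) (nsmul_mem hMy N)

variable [Module ℝ E]

theorem AddSubmonoid.rat_smul_mem_nsmulSaturation {r : ℚ} (hr : 0 ≤ r) {x : E}
    (hx : x ∈ Γ.nsmulSaturation) : (r : ℝ) • x ∈ Γ.nsmulSaturation := by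
  obtain ⟨N, hN, hNx⟩ := hx
  refine ⟨r.den * N, Nat.mul_pos r.den_pos hN, ?_⟩
  have hnum : ((r.num.toNat : ℕ) : ℝ) = r.num := by
    exact_mod_cast Int.toNat_of_nonneg (Rat.num_nonneg.mpr hr)
  have : (r.den * N) • ((r : ℝ) • x) = r.num.toNat • (N • x) := by
    rw [← Nat.cast_smul_eq_nsmul ℝ, ← Nat.cast_smul_eq_nsmul ℝ, ← Nat.cast_smul_eq_nsmul ℝ,
      smul_smul, smul_smul, Rat.cast_def, hnum]
    congr 1
    have : (r.den : ℝ) ≠ 0 := by positivity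
    push_cast
    field_simp
  rw [this]
  exact nsmul_mem hNx _

end Saturation

theorem closedConvexConeHull_subset_closure_nsmulSaturation {E : Type*} [AddCommGroup E]
    [Module ℝ E] [TopologicalSpace E] [ContinuousAdd E] [ContinuousSMul ℝ E]
    (Γ : AddSubmonoid E) : closedConvexConeHull (Γ : Set E) ⊆ closure Γ.nsmulSaturation := by
  have hsmul : ∀ c : ℝ, 0 ≤ c → ∀ x ∈ closure Γ.nsmulSaturation,
      c • x ∈ closure Γ.nsmulSaturation := by
    intro c hc x hx
    rcases hc.eq_or_lt with rfl | hc
    · exact subset_closure ⟨1, one_pos, by simp⟩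
    have hcl : c ∈ closure (Set.Ioi 0 ∩ Set.range ((↑) : ℚ → ℝ)) :=
      Rat.denseRange_cast.open_subset_closure_inter isOpen_Ioi hc
    refine map_mem_closure₂ continuous_smul hcl hx ?_
    rintro _ ⟨hr, r, rfl⟩ y hy
    exact Γ.rat_smul_mem_nsmulSaturation (Rat.cast_pos.mp (Set.mem_Ioi.mp hr)).le hy
  refine closedConvexConeHull_subset
    (fun x hx => subset_closure ⟨1, one_pos, by simpa using hx⟩) isClosed_closure ?_ hsmul
  intro x hx y hy s t hs ht _
  exact map_mem_closure₂ continuous_add (hsmul s hs x hx) (hsmul t ht y hy)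
    fun _ h₁ _ h₂ => Γ.add_mem_nsmulSaturation h₁ h₂

theorem Finsupp.exists_add_eq_of_le_degree {σ : Type*} {μ : σ →₀ ℕ} {u : ℕ}
    (h : u ≤ μ.degree) : ∃ μ₁ μ₂ : σ →₀ ℕ, μ = μ₁ + μ₂ ∧ μ₁.degree = u := by
  induction u with
  | zero => exact ⟨0, μ, by simp, by simp⟩
  | succ u ih =>
    obtain ⟨μ₁, μ₂, rfl, hμ₁⟩ := ih (Nat.le_of_succ_le h)
    obtain ⟨i, hi⟩ : ∃ i, μ₂ i ≠ 0 := by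
      by_contra! h₂
      have : μ₂ = 0 := Finsupp.ext h₂
      simp [this, hμ₁] at h
    have hle : Finsupp.single i 1 ≤ μ₂ := Finsupp.single_le_iff.mpr (Nat.one_le_iff_ne_zero.mpr hi)
    refine ⟨μ₁ + Finsupp.single i 1, μ₂ - Finsupp.single i 1, ?_, by simp [hμ₁]⟩
    rw [add_assoc, add_tsub_cancel_of_le hle]

namespace MvPolynomial

variable {σ R : Type*} [CommSemiring R]

theorem homogeneousSubmodule_add_le_mul (u u' : ℕ) :
    homogeneousSubmodule σ R (u + u') ≤
      homogeneousSubmodule σ R u * homogeneousSubmodule σ R u' := by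
  intro f hf
  rw [f.as_sum]
  refine Submodule.sum_mem _ fun μ hμ => ?_
  have hμ : μ.degree = u + u' := by
    by_contra h
    exact mem_support_iff.mp hμ (((mem_homogeneousSubmodule _ _).mp hf).coeff_eq_zero h)
  obtain ⟨μ₁, μ₂, rfl, hμ₁⟩ := Finsupp.exists_add_eq_of_le_degree (μ := μ) (u := u) (by omega)
  rw [← mul_one (coeff _ f), ← monomial_mul]
  exact Submodule.mul_mem_mul (isHomogeneous_monomial _ hμ₁)
    (isHomogeneous_monomial _ (by rw [map_add] at hμ; omega))

attribute [local instance] gradedAlgebra in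
theorem homogeneousComponent_add_mul {g : MvPolynomial σ R} {j : ℕ} (hg : g.IsHomogeneous j)
    (r : MvPolynomial σ R) (i : ℕ) :
    homogeneousComponent (i + j) (r * g) = homogeneousComponent i r * g := by
  have := DirectSum.coe_decompose_mul_add_of_right_mem (homogeneousSubmodule σ R) (a := r)
    (i := i) ((mem_homogeneousSubmodule j g).mpr hg)
  rwa [← decomposition.decompose'_apply, ← decomposition.decompose'_apply]

def IsGeneratedInDegreeLE (J : Ideal (MvPolynomial σ R)) (δ : ℕ) : Prop :=
  ∃ S : Set (MvPolynomial σ R), (∀ f ∈ S, ∃ e ≤ δ, f.IsHomogeneous e) ∧ J = Ideal.span S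

namespace IsGeneratedInDegreeLE

variable {J J' : Ideal (MvPolynomial σ R)} {δ δ' : ℕ}

theorem mono (hJ : IsGeneratedInDegreeLE J δ) (h : δ ≤ δ') : IsGeneratedInDegreeLE J δ' := by
  obtain ⟨S, hS, rfl⟩ := hJ
  exact ⟨S, fun f hf => (hS f hf).imp fun e he => ⟨he.1.trans h, he.2⟩, rfl⟩

theorem mul (hJ : IsGeneratedInDegreeLE J δ) (hJ' : IsGeneratedInDegreeLE J' δ') :
    IsGeneratedInDegreeLE (J * J') (δ + δ') := by
  obtain ⟨S, hS, rfl⟩ := hJ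
  obtain ⟨S', hS', rfl⟩ := hJ'
  refine ⟨S * S', ?_, Ideal.span_mul_span' S S'⟩
  rintro _ ⟨f, hf, f', hf', rfl⟩
  obtain ⟨e, he, hfe⟩ := hS f hf
  obtain ⟨e', he', hfe'⟩ := hS' f' hf'
  exact ⟨e + e', add_le_add he he', hfe.mul hfe'⟩

theorem pow (hJ : IsGeneratedInDegreeLE J δ) (k : ℕ) : IsGeneratedInDegreeLE (J ^ k) (k * δ) := by
  induction k with
  | zero =>
    refine ⟨{1}, ?_, by rw [pow_zero, Ideal.one_eq_top, Ideal.span_singleton_one]⟩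
    rintro _ rfl
    exact ⟨0, Nat.zero_le _, isHomogeneous_one σ R⟩
  | succ k ih => simpa [pow_succ, Nat.succ_mul] using ih.mul hJ

end IsGeneratedInDegreeLE

end MvPolynomial

section IdealComponent

variable {n : ℕ} {J J' : Ideal (MvPolynomial (Fin (n + 1)) ℂ)}

theorem mem_idealComponent {s : ℕ} {f : MvPolynomial (Fin (n + 1)) ℂ} :
    f ∈ idealComponent J s ↔ f ∈ J ∧ f.IsHomogeneous s := by
  rw [idealComponent, Submodule.mem_inf, Submodule.restrictScalars_mem, mem_homogeneousSubmodule]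

theorem mul_idealComponent_le (J J' : Ideal (MvPolynomial (Fin (n + 1)) ℂ)) (s s' : ℕ) :
    idealComponent J s * idealComponent J' s' ≤ idealComponent (J * J') (s + s') := by
  refine Submodule.mul_le.mpr fun f hf g hg => ?_
  rw [mem_idealComponent] at hf hg ⊢
  exact ⟨Ideal.mul_mem_mul hf.1 hg.1, hf.2.mul hg.2⟩

theorem pow_idealComponent_le (J : Ideal (MvPolynomial (Fin (n + 1)) ℂ)) (s k : ℕ) :
    idealComponent J s ^ k ≤ idealComponent (J ^ k) (k * s) := by
  induction k with
  | zero =>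
    rw [pow_zero, zero_mul, Submodule.one_eq_span, Submodule.span_le, Set.singleton_subset_iff]
    exact mem_idealComponent.mpr ⟨by simp, isHomogeneous_one _ _⟩
  | succ k ih =>
    rw [pow_succ, pow_succ, Nat.succ_mul]
    exact (mul_le_mul' ih le_rfl).trans (mul_idealComponent_le _ _ _ _)

/-- The degree-`(s + s')` part of `r g g'`, for generators `g` of `J` and `g'` of `J'`, is
`r' g g'` with `r'` homogeneous; splitting the monomials of `r'` brings `g` up to degree `s` and
`g'` up to degree `s'`. -/
theorem idealComponent_mul_le {s s' : ℕ} (hJ : IsGeneratedInDegreeLE J s)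
    (hJ' : IsGeneratedInDegreeLE J' s') :
    idealComponent (J * J') (s + s') ≤ idealComponent J s * idealComponent J' s' := by
  obtain ⟨T, hT, rfl⟩ := hJ
  obtain ⟨T', hT', rfl⟩ := hJ'
  have hgen : ∀ g ∈ T * T', ∀ r, homogeneousComponent (s + s') (r * g) ∈
      idealComponent (Ideal.span T) s * idealComponent (Ideal.span T') s' := by
    rintro _ ⟨t, ht, t', ht', rfl⟩ r
    obtain ⟨e, he, hte⟩ := hT t ht
    obtain ⟨e', he', hte'⟩ := hT' t' ht'
    have hdeg : s + s' = ((s - e) + (s' - e')) + (e + e') := by omega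
    rw [hdeg, homogeneousComponent_add_mul (hte.mul hte')]
    have hx := homogeneousSubmodule_add_le_mul (s - e) (s' - e')
      (homogeneousComponent_mem ((s - e) + (s' - e')) r)
    generalize homogeneousComponent ((s - e) + (s' - e')) r = x at hx ⊢
    induction hx using Submodule.mul_induction_on' with
    | mem_mul_mem y hy y' hy' =>
      rw [mul_mul_mul_comm]
      refine Submodule.mul_mem_mul (mem_idealComponent.mpr ⟨?_, ?_⟩)
        (mem_idealComponent.mpr ⟨?_, ?_⟩)
      · exact Ideal.mul_mem_left _ _ (Ideal.subset_span ht)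
      · simpa [Nat.sub_add_cancel he] using ((mem_homogeneousSubmodule _ _).mp hy).mul hte
      · exact Ideal.mul_mem_left _ _ (Ideal.subset_span ht')
      · simpa [Nat.sub_add_cancel he'] using ((mem_homogeneousSubmodule _ _).mp hy').mul hte'
    | add x _ x' _ hx hx' => rw [add_mul]; exact add_mem hx hx'
  intro f hf
  obtain ⟨hfJ, hfh⟩ := mem_idealComponent.mp hf
  rw [Ideal.span_mul_span'] at hfJ
  suffices ∀ r, homogeneousComponent (s + s') (r * f) ∈
      idealComponent (Ideal.span T) s * idealComponent (Ideal.span T') s' by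
    simpa [homogeneousComponent_of_mem ((mem_homogeneousSubmodule _ _).mpr hfh)] using this 1
  clear hf hfh
  induction hfJ using Submodule.span_induction with
  | mem g hg => exact hgen g hg
  | zero => simp
  | add g g' _ _ hg hg' => intro r; rw [mul_add, map_add]; exact add_mem (hg r) (hg' r)
  | smul c g _ hg => intro r; rw [smul_eq_mul, ← mul_assoc]; exact hg (r * c)

theorem idealComponent_pow_le {s : ℕ} (hJ : IsGeneratedInDegreeLE J s) (k : ℕ) :
    idealComponent (J ^ k) (k * s) ≤ idealComponent J s ^ k := by
  induction k with
  | zero =>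
    rw [zero_mul, pow_zero]
    intro f hf
    by_cases h : f = 0
    · simp [h]
    rw [totalDegree_eq_zero_iff_eq_C.mp ((mem_idealComponent.mp hf).2.totalDegree h)]
    exact Submodule.algebraMap_mem _
  | succ k ih =>
    rw [pow_succ, pow_succ, Nat.succ_mul]
    exact (idealComponent_mul_le (hJ.pow k) hJ).trans (mul_le_mul' ih le_rfl)

end IdealComponent

theorem Nat.cast_sub_eq_max_zero (m k : ℕ) : ((m - k : ℕ) : ℝ) = max 0 ((m : ℝ) - k) := by
  rcases le_total m k with h | h
  · rw [Nat.sub_eq_zero_of_le h, Nat.cast_zero, max_eq_left (by simpa using h)]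
  · rw [Nat.cast_sub h, max_eq_right (by simpa using h)]

theorem dehom_X_zero (n : ℕ) : dehom n (X 0) = 1 := by
  rw [dehom, aeval_X]
  rfl

section Padding

variable {n : ℕ}

/-- The point of `F^a f₀^(a p) x₀^r`, `p = (a s - b t)⁺`, when `y` is the point of `F ∈ (I^t)_s`
and `c₀` the value of `f₀`. -/
def padding (a b : ℕ) (c₀ : Fin n → ℝ) (y : (Fin n → ℝ) × ℝ × ℝ) : (Fin n → ℝ) × ℝ :=
  ((a : ℝ) • y.1 + (a * max 0 (a * y.2.1 - b * y.2.2)) • c₀, y.2.2 + max 0 (a * y.2.1 - b * y.2.2))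

variable (a b : ℕ) (c₀ : Fin n → ℝ)

theorem continuous_padding : Continuous (padding a b c₀) := by
  unfold padding
  fun_prop

theorem padding_smul {c : ℝ} (hc : 0 ≤ c) (y : (Fin n → ℝ) × ℝ × ℝ) :
    padding a b c₀ (c • y) = c • padding a b c₀ y := by
  have hmax : max 0 (a * (c * y.2.1) - b * (c * y.2.2)) = c * max 0 (a * y.2.1 - b * y.2.2) := by
    rw [mul_max_of_nonneg _ _ hc, mul_zero]
    ring_nf
  simp only [padding, Prod.smul_fst, Prod.smul_snd, smul_eq_mul, hmax]
  ext <;> simp <;> ring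

theorem padding_fiber (ha : 0 < a) (α : Fin n → ℝ) :
    padding a b c₀ (α, (b : ℝ) / a, 1) = ((a : ℝ) • α, 1) := by
  have : (a : ℝ) * (b / a) - b * 1 = 0 := by field_simp; ring
  simp only [padding, this, max_self, mul_zero, zero_smul, add_zero]

end Padding

section Semigroups

variable {n : ℕ} {w : MvPolynomial (Fin n) ℂ → (Fin n → ℤ)}

theorem mem_gradedSemigroup {I : Ideal (MvPolynomial (Fin (n + 1)) ℂ)}
    {y : (Fin n → ℝ) × ℝ × ℝ} :
    y ∈ gradedSemigroup w I ↔ ∃ s t : ℕ, ∃ F ∈ idealComponent (I ^ t) s, dehom n F ≠ 0 ∧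
      y = (fun i => (w (dehom n F) i : ℝ), (s : ℝ), (t : ℝ)) := by
  constructor
  · rintro ⟨s, t, _, ⟨_, ⟨⟨F, hF, rfl⟩, hF0⟩, rfl⟩, rfl⟩
    exact ⟨s, t, F, hF, hF0, rfl⟩
  · rintro ⟨s, t, F, hF, hF0, rfl⟩
    exact ⟨s, t, _, ⟨_, ⟨⟨F, hF, rfl⟩, hF0⟩, rfl⟩, rfl⟩

theorem mem_subspaceSemigroup {L : Submodule ℂ (MvPolynomial (Fin n) ℂ)}
    {y : (Fin n → ℝ) × ℝ} :
    y ∈ subspaceSemigroup w L ↔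
      ∃ u : ℕ, ∃ f ∈ L ^ u, f ≠ 0 ∧ y = (fun i => (w f i : ℝ), (u : ℝ)) := by
  constructor
  · rintro ⟨u, _, ⟨f, ⟨hf, hf0⟩, rfl⟩, rfl⟩
    exact ⟨u, f, hf, hf0, rfl⟩
  · rintro ⟨u, f, hf, hf0, rfl⟩
    exact ⟨u, _, ⟨f, ⟨hf, hf0⟩, rfl⟩, rfl⟩

variable (hw : ∀ p r : MvPolynomial (Fin n) ℂ, p ≠ 0 → r ≠ 0 → w (p * r) = w p + w r)
include hw

theorem map_one_of_map_mul : w 1 = 0 := by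
  simpa using hw 1 1 one_ne_zero one_ne_zero

theorem map_pow_of_map_mul {p : MvPolynomial (Fin n) ℂ} (hp : p ≠ 0) (m : ℕ) :
    w (p ^ m) = m • w p := by
  induction m with
  | zero => rw [pow_zero, zero_smul, map_one_of_map_mul hw]
  | succ m ih => rw [pow_succ, hw _ _ (pow_ne_zero m hp) hp, ih, succ_nsmul]

def gradedSubmonoid (I : Ideal (MvPolynomial (Fin (n + 1)) ℂ)) :
    AddSubmonoid ((Fin n → ℝ) × ℝ × ℝ) where
  carrier := gradedSemigroup w I
  add_mem' := by
    rintro _ _ hx hy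
    obtain ⟨s, t, F, hF, hF0, rfl⟩ := mem_gradedSemigroup.mp hx
    obtain ⟨s', t', G, hG, hG0, rfl⟩ := mem_gradedSemigroup.mp hy
    refine mem_gradedSemigroup.mpr ⟨s + s', t + t', F * G, ?_, by simpa using And.intro hF0 hG0, ?_⟩
    · rw [pow_add]
      exact mul_idealComponent_le _ _ _ _ (Submodule.mul_mem_mul hF hG)
    · rw [map_mul, hw _ _ hF0 hG0]
      ext <;> simp
  zero_mem' := by
    refine mem_gradedSemigroup.mpr ⟨0, 0, 1, mem_idealComponent.mpr ⟨by simp,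
      isHomogeneous_one _ _⟩, by simp, ?_⟩
    ext <;> simp [map_one_of_map_mul hw]

end Semigroups

section Fiber

variable {n : ℕ} {w : MvPolynomial (Fin n) ℂ → (Fin n → ℤ)}
  {I : Ideal (MvPolynomial (Fin (n + 1)) ℂ)} {a b : ℕ}

theorem exists_dehom_ne_zero_of_mem_closedConvexConeHull {S : Set (MvPolynomial (Fin (n + 1)) ℂ)}
    {y : (Fin n → ℝ) × ℝ × ℝ} (hy : y ∈ closedConvexConeHull (gradedSemigroup w (Ideal.span S)))
    (hy0 : y.2.2 ≠ 0) : ∃ f₀ ∈ S, dehom n f₀ ≠ 0 := by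
  by_contra! h
  have hker : Ideal.span S ≤ RingHom.ker (dehom n) :=
    Ideal.span_le.mpr fun f hf => RingHom.mem_ker.mpr (h f hf)
  suffices closedConvexConeHull (gradedSemigroup w (Ideal.span S)) ⊆ {z | z.2.2 = 0} from
    hy0 (this hy)
  refine closedConvexConeHull_subset ?_ (isClosed_eq (by fun_prop) continuous_const) ?_ ?_
  · intro z hz
    obtain ⟨s, t, F, hF, hF0, rfl⟩ := mem_gradedSemigroup.mp hz
    by_contra ht
    exact hF0 (hker (Ideal.pow_le_self (by simpa using ht) (mem_idealComponent.mp hF).1))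
  · intro x (hx : x.2.2 = 0) z (hz : z.2.2 = 0) s t _ _ _
    simp [hx, hz]
  · intro c _ x (hx : x.2.2 = 0)
    simp [hx]

theorem mem_underlineDelta_of_mem_NObodySubspace (ha : 0 < a) {β : Fin n → ℝ}
    (hβ : β ∈ NObodySubspace w (Submodule.map (dehom n).toLinearMap (idealComponent (I ^ a) b))) :
    ((a : ℝ)⁻¹ • β, (b : ℝ) / a) ∈ underlineDelta w I := by
  set L := Submodule.map (dehom n).toLinearMap (idealComponent (I ^ a) b)
  let T : ((Fin n → ℝ) × ℝ) →L[ℝ] (Fin n → ℝ) × ℝ × ℝ :=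
    (ContinuousLinearMap.fst ℝ _ _).prod
      (((b : ℝ) • ContinuousLinearMap.snd ℝ _ _).prod ((a : ℝ) • ContinuousLinearMap.snd ℝ _ _))
  have hT : Set.MapsTo T (subspaceSemigroup w L) (closedConvexConeHull (gradedSemigroup w I)) := by
    intro y hy
    obtain ⟨u, f, hf, hf0, rfl⟩ := mem_subspaceSemigroup.mp hy
    rw [← Submodule.map_pow] at hf
    obtain ⟨F, hF, rfl⟩ := hf
    refine subset_closedConvexConeHull _ (mem_gradedSemigroup.mpr ⟨u * b, a * u, F, ?_, hf0, ?_⟩)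
    · rw [pow_mul]
      exact pow_idealComponent_le _ _ _ hF
    · ext <;> simp [T, mul_comm]
  have := smul_mem_closedConvexConeHull (c := (a : ℝ)⁻¹) (by positivity)
    (mapsTo_closedConvexConeHull T hT hβ)
  have ha' : (a : ℝ) ≠ 0 := by positivity
  show ((a : ℝ)⁻¹ • β, (b : ℝ) / a, (1 : ℝ)) ∈ closedConvexConeHull _
  convert this using 1
  ext <;> simp [T, ha', div_eq_inv_mul]

variable (hw : ∀ p r : MvPolynomial (Fin n) ℂ, p ≠ 0 → r ≠ 0 → w (p * r) = w p + w r)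
include hw

theorem padding_mem_subspaceSemigroup (hIa : IsGeneratedInDegreeLE (I ^ a) b) {e : ℕ}
    {f₀ : MvPolynomial (Fin (n + 1)) ℂ} (hf₀ : f₀ ∈ I) (hf₀e : f₀.IsHomogeneous e)
    (hdf₀ : dehom n f₀ ≠ 0) (hae : a * e < b) {y : (Fin n → ℝ) × ℝ × ℝ}
    (hy : y ∈ gradedSemigroup w I) :
    padding a b (fun i => (w (dehom n f₀) i : ℝ)) y ∈
      subspaceSemigroup w (Submodule.map (dehom n).toLinearMap (idealComponent (I ^ a) b)) := by
  obtain ⟨s, t, F, hF, hF0, rfl⟩ := mem_gradedSemigroup.mp hy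
  obtain ⟨hFI, hFs⟩ := mem_idealComponent.mp hF
  set p := a * s - t * b with hp
  have hdeg : a * s + a * p * e ≤ (t + p) * b := by
    have h₁ : a * s ≤ t * b + p := by omega
    have h₂ : p * (a * e + 1) ≤ p * b := Nat.mul_le_mul_left p hae
    nlinarith
  set r := (t + p) * b - (a * s + a * p * e)
  set G := F ^ a * f₀ ^ (a * p) * X 0 ^ r
  have hG : G ∈ idealComponent ((I ^ a) ^ (t + p)) ((t + p) * b) := by
    refine mem_idealComponent.mpr ⟨?_, ?_⟩
    · rw [← pow_mul, mul_add, pow_add, mul_comm a t, pow_mul]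
      exact Ideal.mul_mem_right _ _
        (Ideal.mul_mem_mul (Ideal.pow_mem_pow hFI a) (Ideal.pow_mem_pow hf₀ _))
    · convert ((hFs.pow a).mul (hf₀e.pow (a * p))).mul ((isHomogeneous_X ℂ 0).pow r) using 1
      rw [mul_comm s a, mul_comm e, one_mul]
      omega
  have hdG : dehom n G = dehom n F ^ a * dehom n f₀ ^ (a * p) := by
    simp only [G, map_mul, map_pow, dehom_X_zero, one_pow, mul_one]
  refine mem_subspaceSemigroup.mpr ⟨t + p, dehom n G, ?_, ?_, ?_⟩
  · rw [← Submodule.map_pow]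
    exact Submodule.mem_map_of_mem (idealComponent_pow_le hIa _ hG)
  · rw [hdG]
    exact mul_ne_zero (pow_ne_zero _ hF0) (pow_ne_zero _ hdf₀)
  · rw [hdG, hw _ _ (pow_ne_zero _ hF0) (pow_ne_zero _ hdf₀), map_pow_of_map_mul hw hF0,
      map_pow_of_map_mul hw hdf₀]
    have hpR : (p : ℝ) = max 0 ((a : ℝ) * s - b * t) := by
      rw [hp, Nat.cast_sub_eq_max_zero]
      push_cast
      ring_nf
    ext i <;> simp [padding, hpR]

theorem smul_mem_NObodySubspace_of_mem_underlineDelta {d : ℕ}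
    (hI : IsGeneratedInDegreeLE I d) (ha : 0 < a) (hdab : d * a < b) {α : Fin n → ℝ}
    (hα : (α, (b : ℝ) / a) ∈ underlineDelta w I) :
    (a : ℝ) • α ∈
      NObodySubspace w (Submodule.map (dehom n).toLinearMap (idealComponent (I ^ a) b)) := by
  obtain ⟨S, hS, rfl⟩ := id hI
  obtain ⟨f₀, hf₀S, hdf₀⟩ := exists_dehom_ne_zero_of_mem_closedConvexConeHull hα one_ne_zero
  obtain ⟨e, hed, hf₀e⟩ := hS f₀ hf₀S
  have hIa : IsGeneratedInDegreeLE (Ideal.span S ^ a) b := (hI.pow a).mono (by linarith)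
  have hae : a * e < b := by nlinarith
  set L := Submodule.map (dehom n).toLinearMap (idealComponent (Ideal.span S ^ a) b)
  let c₀ : Fin n → ℝ := fun i => (w (dehom n f₀) i : ℝ)
  let Γ := gradedSubmonoid hw (Ideal.span S)
  have hmaps : Set.MapsTo (padding a b c₀) Γ.nsmulSaturation
      (closedConvexConeHull (subspaceSemigroup w L)) := by
    rintro y ⟨N, hN, hNy⟩
    have hN' : (0 : ℝ) < N := by exact_mod_cast hN
    have hy : padding a b c₀ y = (N : ℝ)⁻¹ • padding a b c₀ (N • y) := by
      rw [← Nat.cast_smul_eq_nsmul ℝ, padding_smul _ _ _ hN'.le, smul_smul,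
        inv_mul_cancel₀ hN'.ne', one_smul]
    rw [hy]
    exact smul_mem_closedConvexConeHull (inv_nonneg.mpr hN'.le) (subset_closedConvexConeHull _
      (padding_mem_subspaceSemigroup hw hIa (Ideal.subset_span hf₀S) hf₀e hdf₀ hae hNy))
  have := map_mem_closure (continuous_padding a b c₀)
    (closedConvexConeHull_subset_closure_nsmulSaturation Γ hα) hmaps
  rwa [padding_fiber _ _ _ ha, (isClosed_closedConvexConeHull _).closure_eq] at this

end Fiber

theorem underlineDelta_fiber_general (n d : ℕ)
    (v : FractionRing (MvPolynomial (Fin n) ℂ) → Lex (Fin n → ℤ))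
    (hv_mul : ∀ f g : FractionRing (MvPolynomial (Fin n) ℂ), f ≠ 0 → g ≠ 0 →
      v (f * g) = v f + v g)
    (I : Ideal (MvPolynomial (Fin (n + 1)) ℂ))
    (hI : ∃ S : Set (MvPolynomial (Fin (n + 1)) ℂ),
      (∀ f ∈ S, ∃ e ≤ d, f.IsHomogeneous e) ∧ I = Ideal.span S)
    (q : ℚ) (hqd : (d : ℚ) < q) (a b : ℕ) (ha : 0 < a)
    (hq : q = (b : ℚ) / (a : ℚ)) :
    {α : Fin n → ℝ |
        (α, (q : ℝ)) ∈
          underlineDelta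
            (fun p => ofLex (v (algebraMap (MvPolynomial (Fin n) ℂ)
              (FractionRing (MvPolynomial (Fin n) ℂ)) p))) I} =
      ((a : ℝ))⁻¹ •
        NObodySubspace
          (fun p => ofLex (v (algebraMap (MvPolynomial (Fin n) ℂ)
            (FractionRing (MvPolynomial (Fin n) ℂ)) p)))
          (Submodule.map (dehom n).toLinearMap (idealComponent (I ^ a) b)) := by
  set w : MvPolynomial (Fin n) ℂ → (Fin n → ℤ) := fun p => ofLex (v (algebraMap _ _ p))
  have hw : ∀ p r, p ≠ 0 → r ≠ 0 → w (p * r) = w p + w r := fun p r hp hr => by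
    simp only [w, map_mul, hv_mul _ _ ((map_ne_zero_iff _ (IsFractionRing.injective _ _)).mpr hp)
      ((map_ne_zero_iff _ (IsFractionRing.injective _ _)).mpr hr), ofLex_add]
  have hdab : d * a < b := by
    rw [hq, lt_div_iff₀ (by exact_mod_cast ha)] at hqd
    exact_mod_cast hqd
  have ha' : (a : ℝ) ≠ 0 := by positivity
  ext α
  simp only [Set.mem_ofPred_eq, hq, Rat.cast_div, Rat.cast_natCast, Set.mem_smul_set]
  constructor
  · exact fun hα => ⟨(a : ℝ) • α, smul_mem_NObodySubspace_of_mem_underlineDelta hw hI ha hdab hα,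
      by rw [smul_smul, inv_mul_cancel₀ ha', one_smul]⟩
  · rintro ⟨β, hβ, rfl⟩
    exact mem_underlineDelta_of_mem_NObodySubspace ha hβ

/-- Let `v` be a `ℤⁿ`-valued valuation with one-dimensional leaves on
`ℂ(x₁,…,xₙ)` whose value group is all of `ℤⁿ`, restricted to `ℂ[x₁,…,xₙ]`. Let
`I ⊆ ℂ[x₀,…,xₙ]` be a nonzero homogeneous ideal generated in degrees `≤ d`, and let
`q = b/a ∈ ℚ` with `q > d` and `a, b > 0`. Then the fiber of `underlineΔ(I)` over `q`
equals `(1/a)·Δ(((I^a)_b)|_{x₀=1})`. -/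
theorem underlineDelta_fiber (n d : ℕ)
    (v : FractionRing (MvPolynomial (Fin n) ℂ) → Lex (Fin n → ℤ))
    (hv_mul : ∀ f g : FractionRing (MvPolynomial (Fin n) ℂ), f ≠ 0 → g ≠ 0 →
      v (f * g) = v f + v g)
    (hv_add : ∀ f g : FractionRing (MvPolynomial (Fin n) ℂ), f ≠ 0 → g ≠ 0 → f + g ≠ 0 →
      min (v f) (v g) ≤ v (f + g))
    (hv_const : ∀ c : ℂ, c ≠ 0 →
      v (algebraMap (MvPolynomial (Fin n) ℂ) (FractionRing (MvPolynomial (Fin n) ℂ)) (C c)) = 0)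
    (hv_leaves : ∀ f g : FractionRing (MvPolynomial (Fin n) ℂ), f ≠ 0 → g ≠ 0 → v f = v g →
      ∃ c : ℂ, c ≠ 0 ∧
        (f = algebraMap (MvPolynomial (Fin n) ℂ) (FractionRing (MvPolynomial (Fin n) ℂ)) (C c) * g ∨
          (f - algebraMap (MvPolynomial (Fin n) ℂ) (FractionRing (MvPolynomial (Fin n) ℂ)) (C c) * g ≠ 0 ∧
            v f < v (f - algebraMap (MvPolynomial (Fin n) ℂ)
              (FractionRing (MvPolynomial (Fin n) ℂ)) (C c) * g))))
    (hv_surj : ∀ γ : Lex (Fin n → ℤ), ∃ f : FractionRing (MvPolynomial (Fin n) ℂ),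
      f ≠ 0 ∧ v f = γ)
    (I : Ideal (MvPolynomial (Fin (n + 1)) ℂ)) (hI0 : I ≠ ⊥)
    (hI : ∃ S : Set (MvPolynomial (Fin (n + 1)) ℂ),
      (∀ f ∈ S, ∃ e ≤ d, f.IsHomogeneous e) ∧ I = Ideal.span S)
    (q : ℚ) (hqd : (d : ℚ) < q) (a b : ℕ) (ha : 0 < a) (hb : 0 < b)
    (hq : q = (b : ℚ) / (a : ℚ)) :
    {α : Fin n → ℝ |
        (α, (q : ℝ)) ∈
          underlineDelta
            (fun p => ofLex (v (algebraMap (MvPolynomial (Fin n) ℂ)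
              (FractionRing (MvPolynomial (Fin n) ℂ)) p))) I} =
      ((a : ℝ))⁻¹ •
        NObodySubspace
          (fun p => ofLex (v (algebraMap (MvPolynomial (Fin n) ℂ)
            (FractionRing (MvPolynomial (Fin n) ℂ)) p)))
          (Submodule.map (dehom n).toLinearMap (idealComponent (I ^ a) b)) :=
  underlineDelta_fiber_general n d v hv_mul I hI q hqd a b ha hq
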